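/- Let 2 ≤ p < ∞ and let φ: (0,∞)×ℝⁿ → ℂ be such that φ, ∂_tφ ∈ V^p. Then for all t > τ > 0, ‖φ(t,·) − φ(τ,·)‖_{L^p(ℝⁿ)} ≲ (t−τ)^{1/2} ‖∂_tφ‖_{V^p}; in particular φ extends to a (1/2)-Hölder continuous map from [0,∞) to L^p(ℝⁿ), and so has a trace in L^p at t = 0. -/

import Mathlib

open MeasureTheory Set ENNReal

/-- The vertical square function norm `‖g‖_{V^p}`. -/
noncomputable def Vnorm (n : ℕ) (p : ℝ)
    (g : ℝ → EuclideanSpace ℝ (Fin n) → ℝ≥0∞) : ℝ≥0∞ :=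
  (∫⁻ x, (∫⁻ t in Ioi (0 : ℝ), (g t x) ^ 2) ^ (p / 2)) ^ (1 / p)

/-! Cauchy–Schwarz on `[τ, t]` bounds `|φ(t,x) − φ(τ,x)|` by `(t − τ)^{1/2}` times the vertical
square function of `∂_tφ` at `x`; taking `L^p` norms in `x` gives the estimate with `C = 1`. -/

theorem enorm_intervalIntegral_le_sqrt_mul_eLpNorm {E : Type*} [NormedAddCommGroup E]
    [NormedSpace ℝ E] {f : ℝ → E} {a b : ℝ} (hab : a ≤ b)
    (hf : AEStronglyMeasurable f (volume.restrict (Ioc a b))) :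
    ‖∫ s in a..b, f s‖ₑ ≤ ENNReal.ofReal √(b - a) * eLpNorm f 2 (volume.restrict (Ioc a b)) := by
  calc ‖∫ s in a..b, f s‖ₑ ≤ eLpNorm f 1 (volume.restrict (Ioc a b)) := by
        rw [intervalIntegral.integral_of_le hab, eLpNorm_one_eq_lintegral_enorm]
        exact enorm_integral_le_lintegral_enorm _
    _ ≤ eLpNorm f 2 (volume.restrict (Ioc a b)) * ENNReal.ofReal (b - a) ^ (1 / 2 : ℝ) := by
        convert eLpNorm_le_eLpNorm_mul_rpow_measure_univ (by norm_num : (1 : ℝ≥0∞) ≤ 2) hf using 2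
        norm_num
    _ = ENNReal.ofReal √(b - a) * eLpNorm f 2 (volume.restrict (Ioc a b)) := by
        rw [mul_comm, ENNReal.ofReal_rpow_of_nonneg (sub_nonneg.2 hab) (by norm_num),
          Real.sqrt_eq_rpow]

theorem Vnorm_enorm_eq_eLpNorm_eLpNorm {n : ℕ} {p : ℝ} (hp : 0 < p) {E : Type*}
    [NormedAddCommGroup E] (g : ℝ → EuclideanSpace ℝ (Fin n) → E) :
    Vnorm n p (fun t x => ‖g t x‖ₑ) =
      eLpNorm (fun x => eLpNorm (g · x) 2 (volume.restrict (Ioi 0))) (ENNReal.ofReal p) volume := by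
  rw [eLpNorm_eq_lintegral_rpow_enorm_toReal (by simpa using hp) ofReal_ne_top,
    ENNReal.toReal_ofReal hp.le, Vnorm]
  congr 1
  refine lintegral_congr fun x => ?_
  rw [eLpNorm_eq_lintegral_rpow_enorm_toReal two_ne_zero ofNat_ne_top, enorm_eq_self,
    ← ENNReal.rpow_mul]
  norm_num [div_eq_inv_mul]

/-- if `2 ≤ p < ∞` and `φ, ∂_tφ ∈ V^p` (the time derivative `ψ` being
realized through the fundamental theorem of calculus), then for all `t > τ > 0`,
`‖φ(t,·) − φ(τ,·)‖_{L^p} ≤ C (t−τ)^{1/2} ‖∂_tφ‖_{V^p}` with `C` depending only on `p`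
(and the dimension); in particular `φ` is `1/2`-Hölder continuous with values in `L^p`. -/
theorem stmt2 (n : ℕ) (p : ℝ) (hp : 2 ≤ p) :
    ∃ C : ℝ≥0∞, 0 < C ∧ C < ⊤ ∧
      ∀ (φ ψ : ℝ → EuclideanSpace ℝ (Fin n) → ℂ),
        Measurable (Function.uncurry φ) → Measurable (Function.uncurry ψ) →
        (∀ x (τ t : ℝ), 0 < τ → τ ≤ t →
          φ t x - φ τ x = ∫ s in τ..t, ψ s x) →
        Vnorm n p (fun t x => (‖φ t x‖₊ : ℝ≥0∞)) < ⊤ →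
        Vnorm n p (fun t x => (‖ψ t x‖₊ : ℝ≥0∞)) < ⊤ →
        ∀ (τ t : ℝ), 0 < τ → τ < t →
          eLpNorm (fun x => φ t x - φ τ x) (ENNReal.ofReal p) volume
            ≤ C * ENNReal.ofReal (Real.sqrt (t - τ)) *
                Vnorm n p (fun s x => (‖ψ s x‖₊ : ℝ≥0∞)) := by
  refine ⟨1, one_pos, one_lt_top, fun φ ψ _ hψ hφψ _ _ τ t hτ hτt => ?_⟩
  have pointwise (x : EuclideanSpace ℝ (Fin n)) : ‖φ t x - φ τ x‖ₑ ≤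
      (Real.sqrt (t - τ)).toNNReal * ‖eLpNorm (ψ · x) 2 (volume.restrict (Ioi 0))‖ₑ := by
    rw [hφψ x τ t hτ hτt.le, enorm_eq_self]
    refine (enorm_intervalIntegral_le_sqrt_mul_eLpNorm hτt.le
      (hψ.comp (measurable_id.prodMk measurable_const)).aestronglyMeasurable).trans ?_
    exact mul_le_mul_right (eLpNorm_mono_measure _
      (Measure.restrict_mono (fun s (hs : s ∈ Ioc τ t) => hτ.trans hs.1) le_rfl)) _
  calc eLpNorm (fun x => φ t x - φ τ x) (ENNReal.ofReal p) volume
      ≤ (Real.sqrt (t - τ)).toNNReal • eLpNorm (fun x => eLpNorm (ψ · x) 2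
          (volume.restrict (Ioi 0))) (ENNReal.ofReal p) volume :=
        eLpNorm_le_nnreal_smul_eLpNorm_of_ae_le_mul' (ae_of_all _ pointwise) _
    _ = 1 * ENNReal.ofReal (Real.sqrt (t - τ)) * Vnorm n p (fun s x => (‖ψ s x‖₊ : ℝ≥0∞)) := by
        rw [one_mul, ← Vnorm_enorm_eq_eLpNorm_eLpNorm (by linarith)]
        rfl
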